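/- If a linear code C has minimum weighted-Hamming distance d_λ(C) < 2(t+1) − λ_m, where λ_m is the maximum scaling coefficient, then its error-correction capability satisfies t_λ(C) < t. -/
import Mathlib


variable {F : Type} [Field F] [Fintype F] [DecidableEq F]

/-- Weighted-Hamming weight of a block-partitioned vector. -/
def wL {m : ℕ} (n : Fin m → ℕ) (lam : Fin m → ℕ) (a : ∀ ℓ, Fin (n ℓ) → F) : ℕ :=
  ∑ ℓ, lam ℓ * hammingNorm (a ℓ)

/-- `τ_λ(c) + 1`: minimum over `r` of `max {w_λ(r), w_λ(c − r)}`. -/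
noncomputable def tauAux {m : ℕ} (n lam : Fin m → ℕ) (c : ∀ ℓ, Fin (n ℓ) → F) : ℕ :=
  sInf {x | ∃ r : ∀ ℓ, Fin (n ℓ) → F, x = max (wL n lam r) (wL n lam (c - r))}

/-- Error-correction radius `τ_λ(c)`. -/
noncomputable def tau {m : ℕ} (n lam : Fin m → ℕ) (c : ∀ ℓ, Fin (n ℓ) → F) : ℕ :=
  tauAux n lam c - 1

/-- Weighted-Hamming ball of radius `t`. -/
def ball {m : ℕ} (n lam : Fin m → ℕ) (t : ℕ) : Set (∀ ℓ, Fin (n ℓ) → F) :=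
  {x | wL n lam x ≤ t}

/-- Difference set of the weighted-Hamming ball of radius `t`. -/
def dball {m : ℕ} (n lam : Fin m → ℕ) (t : ℕ) : Set (∀ ℓ, Fin (n ℓ) → F) :=
  {z | ∃ x ∈ ball n lam t, ∃ y ∈ ball n lam t, z = x - y}

/-- Minimum weighted-Hamming distance of a linear code. -/
noncomputable def dL {m : ℕ} (n lam : Fin m → ℕ) (C : Submodule F (∀ ℓ, Fin (n ℓ) → F)) : ℕ :=
  sInf {x | ∃ c ∈ C, c ≠ 0 ∧ x = wL n lam c}

/-- Error-correction capability of a linear code. -/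
noncomputable def tL {m : ℕ} (n lam : Fin m → ℕ) (C : Submodule F (∀ ℓ, Fin (n ℓ) → F)) : ℕ :=
  sInf {x | ∃ c ∈ C, c ≠ 0 ∧ x = tau n lam c}

set_option linter.unusedSectionVars false

lemma hn_sum {N : ℕ} (x : Fin N → F) :
    hammingNorm x = ∑ i, if x i ≠ 0 then 1 else 0 := by
  rw [hammingNorm, Finset.card_filter]

lemma hn_selector {N : ℕ} (x r : Fin N → F) (h : ∀ i, r i = x i ∨ r i = 0) :
    hammingNorm r + hammingNorm (x - r) = hammingNorm x := by
  rw [hn_sum, hn_sum, hn_sum, ← Finset.sum_add_distrib]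
  refine Finset.sum_congr rfl fun i _ => ?_
  rcases h i with h|h <;> simp [Pi.sub_apply, h, sub_eq_zero]

lemma hn_update_zero {N : ℕ} (x : Fin N → F) (i : Fin N) (h : x i ≠ 0) :
    hammingNorm (Function.update x i 0) + 1 = hammingNorm x := by
  rw [hn_sum, hn_sum, ← Finset.sum_erase_add _ _ (Finset.mem_univ i),
    ← Finset.sum_erase_add _ _ (Finset.mem_univ i)]
  have : ∀ j ∈ Finset.univ.erase i,
      (if Function.update x i 0 j ≠ 0 then 1 else 0) = (if x j ≠ 0 then (1:ℕ) else 0) := by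
    intro j hj
    rw [Function.update_of_ne (Finset.ne_of_mem_erase hj)]
  rw [Finset.sum_congr rfl this]
  simp [h]

lemma wL_zero {m : ℕ} (n lam : Fin m → ℕ) : wL n lam (0 : ∀ ℓ, Fin (n ℓ) → F) = 0 := by
  simp [wL]

lemma wL_selector {m : ℕ} (n lam : Fin m → ℕ) (c r : ∀ ℓ, Fin (n ℓ) → F)
    (h : ∀ ℓ i, r ℓ i = c ℓ i ∨ r ℓ i = 0) :
    wL n lam r + wL n lam (c - r) = wL n lam c := by
  rw [wL, wL, wL, ← Finset.sum_add_distrib]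
  refine Finset.sum_congr rfl fun ℓ _ => ?_
  rw [← Nat.mul_add]
  congr 1
  exact hn_selector (c ℓ) (r ℓ) (h ℓ)

lemma wL_update {m : ℕ} (n lam : Fin m → ℕ) (c : ∀ ℓ, Fin (n ℓ) → F) (ℓ : Fin m)
    (i : Fin (n ℓ)) (h : c ℓ i ≠ 0) :
    wL n lam (Function.update c ℓ (Function.update (c ℓ) i 0)) + lam ℓ = wL n lam c := by
  rw [wL, wL, ← Finset.sum_erase_add _ _ (Finset.mem_univ ℓ),
    ← Finset.sum_erase_add _ _ (Finset.mem_univ ℓ)]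
  have hrest : ∀ ℓ' ∈ Finset.univ.erase ℓ,
      lam ℓ' * hammingNorm (Function.update c ℓ (Function.update (c ℓ) i 0) ℓ')
        = lam ℓ' * hammingNorm (c ℓ') := by
    intro ℓ' hℓ'
    rw [Function.update_of_ne (Finset.ne_of_mem_erase hℓ')]
  rw [Finset.sum_congr rfl hrest, Function.update_self, add_assoc, ← Nat.mul_succ]
  congr 2
  exact hn_update_zero (c ℓ) i h

lemma wL_pos_elim {m : ℕ} (n lam : Fin m → ℕ) (c : ∀ ℓ, Fin (n ℓ) → F)
    (h : wL n lam c ≠ 0) : ∃ ℓ i, c ℓ i ≠ 0 := by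
  by_contra hcon
  push_neg at hcon
  apply h
  have : c = 0 := by funext ℓ i; exact hcon ℓ i
  rw [this, wL_zero]

lemma split_exists {m : ℕ} (n lam : Fin m → ℕ) (t L : ℕ) (hL : ∀ ℓ, lam ℓ ≤ L) (hlam : ∀ ℓ, 1 ≤ lam ℓ) :
    ∀ W (c : ∀ ℓ, Fin (n ℓ) → F), wL n lam c = W → wL n lam c + L ≤ 2 * t + 1 →
      ∃ r, (∀ ℓ i, r ℓ i = c ℓ i ∨ r ℓ i = 0) ∧ wL n lam r ≤ t ∧
        wL n lam c ≤ wL n lam r + t := by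
  intro W
  induction W using Nat.strong_induction_on with
  | _ W ih =>
    intro c hW hbound
    by_cases hct : wL n lam c ≤ t
    · exact ⟨0, fun ℓ i => Or.inr rfl, by rw [wL_zero]; omega, by rw [wL_zero]; omega⟩
    · obtain ⟨ℓ, i, hne⟩ := wL_pos_elim n lam c (by omega)
      set c' := Function.update c ℓ (Function.update (c ℓ) i 0) with hc'
      have hdrop : wL n lam c' + lam ℓ = wL n lam c := wL_update n lam c ℓ i hne
      have hlampos : 1 ≤ lam ℓ := hlam ℓ
      obtain ⟨r', hsel', hr't, hbound'⟩ := ih (wL n lam c') (by omega) c' rfl (by omega)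
      have hr'0 : r' ℓ i = 0 := by
        rcases hsel' ℓ i with h|h
        · rw [h, hc', Function.update_self, Function.update_self]
        · exact h
      by_cases hcase : wL n lam r' + lam ℓ ≤ t
      · refine ⟨Function.update r' ℓ (Function.update (r' ℓ) i (c ℓ i)), ?_, ?_, ?_⟩
        · intro ℓ' i'
          by_cases hℓ : ℓ' = ℓ
          · subst hℓ
            rw [Function.update_self]
            by_cases hi : i' = i
            · subst hi; rw [Function.update_self]; exact Or.inl rfl
            · rw [Function.update_of_ne hi]
              have := hsel' ℓ' i'
              rwa [hc', Function.update_self, Function.update_of_ne hi] at this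
          · rw [Function.update_of_ne hℓ]
            have := hsel' ℓ' i'
            rwa [hc', Function.update_of_ne hℓ] at this
          
        · -- wL r = wL r' + lam ℓ
          have hkey : wL n lam r' + lam ℓ
              = wL n lam (Function.update r' ℓ (Function.update (r' ℓ) i (c ℓ i))) := by
            have := wL_update n lam (Function.update r' ℓ (Function.update (r' ℓ) i (c ℓ i)))
              ℓ i (by rw [Function.update_self, Function.update_self]; exact hne)
            rw [Function.update_self] at this
            have heq : Function.update (Function.update r' ℓ (Function.update (r' ℓ) i (c ℓ i))) ℓ
                (Function.update (Function.update (r' ℓ) i (c ℓ i)) i 0) = r' := by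
              funext ℓ' i'
              rcases eq_or_ne ℓ' ℓ with hℓ|hℓ
              · subst hℓ
                rw [Function.update_self]
                rcases eq_or_ne i' i with hi|hi
                · subst hi; rw [Function.update_self]; exact hr'0.symm
                · rw [Function.update_of_ne hi, Function.update_of_ne hi]
              · rw [Function.update_of_ne hℓ, Function.update_of_ne hℓ]
            rw [heq] at this
            omega
          omega
        · have hkey : wL n lam r' + lam ℓ
              = wL n lam (Function.update r' ℓ (Function.update (r' ℓ) i (c ℓ i))) := by
            have := wL_update n lam (Function.update r' ℓ (Function.update (r' ℓ) i (c ℓ i)))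
              ℓ i (by rw [Function.update_self, Function.update_self]; exact hne)
            rw [Function.update_self] at this
            have heq : Function.update (Function.update r' ℓ (Function.update (r' ℓ) i (c ℓ i))) ℓ
                (Function.update (Function.update (r' ℓ) i (c ℓ i)) i 0) = r' := by
              funext ℓ' i'
              rcases eq_or_ne ℓ' ℓ with hℓ|hℓ
              · subst hℓ
                rw [Function.update_self]
                rcases eq_or_ne i' i with hi|hi
                · subst hi; rw [Function.update_self]; exact hr'0.symm
                · rw [Function.update_of_ne hi, Function.update_of_ne hi]
              · rw [Function.update_of_ne hℓ, Function.update_of_ne hℓ]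
            rw [heq] at this
            omega
          omega
      · refine ⟨r', ?_, hr't, ?_⟩
        · intro ℓ' i'
          by_cases hℓ : ℓ' = ℓ
          · subst hℓ
            by_cases hi : i' = i
            · subst hi; exact Or.inr hr'0
            · have := hsel' ℓ' i'
              rwa [hc', Function.update_self, Function.update_of_ne hi] at this
          · have := hsel' ℓ' i'
            rwa [hc', Function.update_of_ne hℓ] at this
        · have := hL ℓ
          omega


/-- if `d_λ(C) < 2(t+1) − λ_m` then `t_λ(C) < t`. -/
theorem tL_lt_of_dL_lt {m : ℕ} (hm : 0 < m) (n lam : Fin m → ℕ)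
    (hmono : Monotone lam) (hlam : ∀ ℓ, 1 ≤ lam ℓ)
    (C : Submodule F (∀ ℓ, Fin (n ℓ) → F)) (hC : C ≠ ⊥) (t : ℕ)
    (hd : dL n lam C < 2 * (t + 1) - lam ⟨m - 1, by omega⟩) :
    tL n lam C < t := by
  obtain ⟨c, hcC, hcne⟩ := (Submodule.ne_bot_iff C).mp hC
  obtain ⟨M, hdM, hMle⟩ : ∃ M : Fin m, dL n lam C < 2 * (t + 1) - lam M ∧
      ∀ ℓ, lam ℓ ≤ lam M := by
    refine ⟨⟨m - 1, by omega⟩, hd, fun ℓ => hmono ?_⟩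
    rw [Fin.le_def]
    show ℓ.val ≤ m - 1
    omega
  have hdne : ({x | ∃ c ∈ C, c ≠ 0 ∧ x = wL n lam c}).Nonempty := ⟨_, c, hcC, hcne, rfl⟩
  obtain ⟨c0, hc0C, hc0ne, hc0w⟩ := Nat.sInf_mem hdne
  have hdL : dL n lam C = wL n lam c0 := hc0w
  have hw1 : 1 ≤ wL n lam c0 := by
    obtain ⟨ℓ, hℓ⟩ : ∃ ℓ, c0 ℓ ≠ 0 := by
      by_contra h
      push_neg at h
      exact hc0ne (funext h)
    have h1 : 0 < lam ℓ * hammingNorm (c0 ℓ) :=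
      Nat.mul_pos (hlam ℓ) (hammingNorm_pos_iff.mpr hℓ)
    calc 1 ≤ lam ℓ * hammingNorm (c0 ℓ) := h1
    _ ≤ ∑ ℓ, lam ℓ * hammingNorm (c0 ℓ) :=
        Finset.single_le_sum (f := fun ℓ => lam ℓ * hammingNorm (c0 ℓ)) (fun _ _ => Nat.zero_le _) (Finset.mem_univ ℓ)
  have hb : wL n lam c0 + lam M ≤ 2 * t + 1 := by omega
  have ht1 : 1 ≤ t := by
    have := hlam M
    omega
  obtain ⟨r, hsel, hrt, hct⟩ :=
    split_exists n lam t (lam M) hMle hlam (wL n lam c0) c0 rfl (by omega)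
  have hsum : wL n lam r + wL n lam (c0 - r) = wL n lam c0 := wL_selector n lam c0 r hsel
  have hmax : max (wL n lam r) (wL n lam (c0 - r)) ≤ t := max_le hrt (by omega)
  have htauAux : tauAux n lam c0 ≤ t :=
    le_trans (Nat.sInf_le ⟨r, rfl⟩) hmax
  have htL : tL n lam C ≤ tau n lam c0 := Nat.sInf_le ⟨c0, hc0C, hc0ne, rfl⟩
  have htau : tau n lam c0 = tauAux n lam c0 - 1 := rfl
  omega
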